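/- arXiv:2306.16256 — 3 statements merged into one kernel-verified Lean document; each statement's English description precedes it below -/
import Mathlib

section
/- Let ε be an integrable random vector in ℝⁿ whose components have a continuous joint distribution (so that P(uᵢ+εᵢ = uⱼ+εⱼ) = 0 for i ≠ j and any u). Then Φ(u) = E[max_i (uᵢ+εᵢ)] is differentiable at every u, with partial derivative ∂Φ/∂uᵢ(u) = P(uᵢ+εᵢ ≥ uⱼ+εⱼ for all j). -/
/-!
For each `ω`, `u ↦ maxᵢ (uᵢ + εᵢ(ω))` is 1-Lipschitz for the sup norm, and when the maximum is
attained at a single index `I` it coincides near `u` with `u ↦ u_I + ε_I(ω)`, so its derivative is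
the coordinate projection `proj I`. By the no-ties hypothesis this holds for almost every `ω`, and
differentiation under the integral sign (dominated by the constant Lipschitz bound) gives
`DΦ(u) = E[proj I(ω)]`, whose value on the `i`-th basis vector is `P(I(ω) = i)`.
-/

open MeasureTheory Finset Filter Topology

section Deterministic

variable {ι : Type*}

lemma isClosed_setOf_forall_le_apply (i : ι) : IsClosed {x : ι → ℝ | ∀ j, x j ≤ x i} := by
  simp only [Set.ofPred_forall]
  exact isClosed_iInter fun j => isClosed_le (continuous_apply j) (continuous_apply i)

variable [Fintype ι]

lemma lipschitzWith_one_sup'_add (s : Finset ι) (hs : s.Nonempty) (c : ι → ℝ) :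
    LipschitzWith 1 fun u : ι → ℝ => s.sup' hs fun i => u i + c i := by
  refine LipschitzWith.of_le_add fun u v => sup'_le _ _ fun i hi => ?_
  have hui : u i ≤ v i + dist u v :=
    sub_le_iff_le_add'.1 ((le_abs_self _).trans ((Real.dist_eq _ _).symm ▸ dist_le_pi_dist u v i))
  linarith [le_sup' (fun i => v i + c i) hi]

lemma hasFDerivAt_sup'_add_of_forall_lt (hne : (univ : Finset ι).Nonempty) {c u : ι → ℝ} {I : ι}
    (hI : ∀ j ≠ I, u j + c j < u I + c I) :
    HasFDerivAt (fun w : ι → ℝ => univ.sup' hne fun i => w i + c i)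
      (ContinuousLinearMap.proj (R := ℝ) I) u := by
  have hnear : ∀ᶠ w in 𝓝 u, ∀ j ≠ I, w j + c j < w I + c I := by
    refine eventually_all.2 fun j => ?_
    rcases eq_or_ne j I with rfl | hj
    · exact Eventually.of_forall fun _ h => absurd rfl h
    · exact (((continuous_apply j).add continuous_const).continuousAt.eventually_lt
        ((continuous_apply I).add continuous_const).continuousAt (hI j hj)).mono fun _ h _ => h
  refine ((hasFDerivAt_apply I u).add_const (c I)).congr_of_eventuallyEq ?_
  filter_upwards [hnear] with w hw
  refine le_antisymm (sup'_le _ _ fun j _ => ?_) (le_sup' (fun i => w i + c i) (mem_univ I))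
  rcases eq_or_ne j I with rfl | hj
  exacts [le_rfl, (hw j hj).le]

noncomputable def argmaxProjSum (x : ι → ℝ) : (ι → ℝ) →L[ℝ] ℝ :=
  ∑ i, if ∀ j, x j ≤ x i then ContinuousLinearMap.proj i else 0

lemma argmaxProjSum_eq_proj {x : ι → ℝ} {I : ι} (hI : ∀ j ≠ I, x j < x I) :
    argmaxProjSum x = ContinuousLinearMap.proj I := by
  rw [argmaxProjSum, sum_eq_single I]
  · exact if_pos fun j => (eq_or_ne j I).elim (fun h => h ▸ le_rfl) fun h => (hI j h).le
  · exact fun j _ hj => if_neg fun h => (hI j hj).not_ge (h I)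
  · exact fun h => absurd (mem_univ I) h

lemma argmaxProjSum_apply_single [DecidableEq ι] (x : ι → ℝ) (i : ι) :
    argmaxProjSum x (Pi.single i 1) = if ∀ j, x j ≤ x i then 1 else 0 := by
  simp only [argmaxProjSum, FunLike.coe_sum, Finset.sum_apply]
  simp only [apply_ite (fun L : (ι → ℝ) →L[ℝ] ℝ => L (Pi.single i 1)),
    ContinuousLinearMap.proj_apply, zero_apply, Pi.single_apply]
  exact (sum_eq_single i (fun j _ hj => by simp [hj]) (by simp)).trans (by simp)

lemma stronglyMeasurable_argmaxProjSum :
    StronglyMeasurable (argmaxProjSum : (ι → ℝ) → (ι → ℝ) →L[ℝ] ℝ) :=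
  Finset.stronglyMeasurable_fun_sum _ fun i _ =>
    .ite (isClosed_setOf_forall_le_apply i).measurableSet stronglyMeasurable_const
      stronglyMeasurable_const

lemma hasFDerivAt_sup'_add_of_injective (hne : (univ : Finset ι).Nonempty) {c u : ι → ℝ}
    (hinj : Function.Injective (u + c)) :
    HasFDerivAt (fun w : ι → ℝ => univ.sup' hne fun i => w i + c i)
      (argmaxProjSum (u + c)) u := by
  have : Nonempty ι := hne.to_subtype.map Subtype.val
  obtain ⟨I, hI⟩ := Finite.exists_max (u + c)
  have hlt : ∀ j ≠ I, (u + c) j < (u + c) I := fun j hj => (hI j).lt_of_ne (hinj.ne hj)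
  rw [argmaxProjSum_eq_proj hlt]
  exact hasFDerivAt_sup'_add_of_forall_lt hne hlt

end Deterministic

section Probability

variable {Ω ι : Type*} [MeasurableSpace Ω] {P : Measure Ω}

lemma ae_injective_of_forall_measure_eq_zero {β : Type*} [Countable ι] {X : Ω → ι → β}
    (h : ∀ i j, i ≠ j → P {ω | X ω i = X ω j} = 0) : ∀ᵐ ω ∂P, Function.Injective (X ω) := by
  have hpair : ∀ i j, ∀ᵐ ω ∂P, X ω i = X ω j → i = j := fun i j => by
    rcases eq_or_ne i j with rfl | hij
    · exact Eventually.of_forall fun _ _ => rfl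
    · exact (measure_eq_zero_iff_ae_notMem.1 (h i j hij)).mono fun _ hω heq => absurd heq hω
  filter_upwards [ae_all_iff.2 fun i => ae_all_iff.2 (hpair i)] with ω hω i j using hω i j

lemma Integrable.finset_sup' {β : Type*} [NormedAddCommGroup β] [Lattice β] [HasSolidNorm β]
    [IsOrderedAddMonoid β] {s : Finset ι} (hs : s.Nonempty) {f : ι → Ω → β}
    (hf : ∀ i ∈ s, Integrable (f i) P) : Integrable (fun ω => s.sup' hs fun i => f i ω) P := by
  convert Finset.sup'_induction hs f (p := fun g : Ω → β => Integrable g P)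
    (fun _ hg _ hh => hg.sup hh) hf using 1
  ext ω
  exact (Finset.sup'_apply ..).symm

lemma integral_argmaxProjSum_apply_single [Fintype ι] [DecidableEq ι] {X : Ω → ι → ℝ}
    (hX : Measurable X) (hint : Integrable (fun ω => argmaxProjSum (X ω)) P) (i : ι) :
    (∫ ω, argmaxProjSum (X ω) ∂P) (Pi.single i 1) = P.real {ω | ∀ j, X ω j ≤ X ω i} := by
  have hA : MeasurableSet {ω | ∀ j, X ω j ≤ X ω i} :=
    (isClosed_setOf_forall_le_apply i).measurableSet.preimage hX
  rw [ContinuousLinearMap.integral_apply hint, ← integral_indicator_one hA]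
  simp only [argmaxProjSum_apply_single, Set.indicator_apply, Set.mem_ofPred_eq, Pi.one_apply]

end Probability

theorem stmt_3 (n : ℕ) (hn : 0 < n)
    {Ω : Type*} [MeasurableSpace Ω] (P : Measure Ω) [IsProbabilityMeasure P]
    (ε : Ω → Fin n → ℝ)
    (hmeas : ∀ i, Measurable (fun ω => ε ω i))
    (hint : ∀ i, Integrable (fun ω => ε ω i) P)
    (hcont : ∀ (u : Fin n → ℝ) (i j : Fin n), i ≠ j →
      P {ω | u i + ε ω i = u j + ε ω j} = 0)
    (Φ : (Fin n → ℝ) → ℝ)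
    (hΦ : ∀ u, Φ u = ∫ ω, Finset.univ.sup'
      (Finset.univ_nonempty_iff.mpr (Fin.pos_iff_nonempty.mp hn))
      (fun i => u i + ε ω i) ∂P)
    (u : Fin n → ℝ) :
    ∃ L : (Fin n → ℝ) →L[ℝ] ℝ, HasFDerivAt Φ L u ∧
      ∀ i, L (Pi.single i 1) =
        (P {ω | ∀ j, u j + ε ω j ≤ u i + ε ω i}).toReal := by
  set hne := Finset.univ_nonempty_iff.mpr (Fin.pos_iff_nonempty.mp hn)
  have hF_int (w : Fin n → ℝ) : Integrable (fun ω => univ.sup' hne fun i => w i + ε ω i) P :=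
    Integrable.finset_sup' hne fun i _ => (integrable_const (w i)).add (hint i)
  have hX : Measurable fun ω => u + ε ω := measurable_const.add (measurable_pi_lambda _ hmeas)
  obtain ⟨hF'_int, hderiv⟩ := hasFDerivAt_integral_of_dominated_loc_of_lip
    (F' := fun ω => argmaxProjSum (u + ε ω)) (bound := fun _ => 1) univ_mem
    (Eventually.of_forall fun w => (hF_int w).aestronglyMeasurable) (hF_int u)
    (stronglyMeasurable_argmaxProjSum.comp_measurable hX).aestronglyMeasurable
    (ae_of_all _ fun ω => by simpa using lipschitzWith_one_sup'_add univ hne (ε ω))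
    (integrable_const 1)
    ((ae_injective_of_forall_measure_eq_zero (hcont u)).mono fun ω hω =>
      hasFDerivAt_sup'_add_of_injective hne hω)
  exact ⟨_, funext hΦ ▸ hderiv, fun i => integral_argmaxProjSum_apply_single hX hF'_int i⟩
end

section
/- A convex function f : ℝⁿ → ℝ that is Gateaux differentiable everywhere (all partial derivatives exist at every point and f is differentiable at every point) is continuously differentiable (of class C¹). -/
/-
The directional derivative of a convex function is the infimum of its difference quotients
`t⁻¹ * (f (x + t • v) - f x)` over `t > 0`, each of which is continuous in `x`; hence
`x ↦ fderiv ℝ f x v` is upper semicontinuous. Applied to `-v`, and using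
`fderiv ℝ f x (-v) = -fderiv ℝ f x v`, it is also lower semicontinuous, hence continuous.
In finite dimension, continuity of every `x ↦ fderiv ℝ f x v` is continuity of `fderiv ℝ f`.
-/

open Filter Set Topology

variable {E : Type*} [NormedAddCommGroup E] [NormedSpace ℝ E] {f : E → ℝ}

theorem ConvexOn.comp_add_smul (hf : ConvexOn ℝ univ f) (x v : E) :
    ConvexOn ℝ univ fun t : ℝ => f (x + t • v) := by
  have hline : (fun t : ℝ => f (x + t • v)) = f ∘ AffineMap.lineMap x (x + v) := by
    ext t
    simp [AffineMap.lineMap_apply, add_comm]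
  simpa [hline] using hf.comp_affineMap (AffineMap.lineMap x (x + v))

theorem ConvexOn.fderiv_apply_le_slope (hf : ConvexOn ℝ univ f) {x : E}
    (hd : DifferentiableAt ℝ f x) (v : E) {t : ℝ} (ht : 0 < t) :
    fderiv ℝ f x v ≤ t⁻¹ * (f (x + t • v) - f x) := by
  simpa [slope_def_field, div_eq_inv_mul] using
    (hf.comp_add_smul x v).le_slope_of_hasDerivAt (mem_univ 0) (mem_univ t) ht
      (hd.hasFDerivAt.hasLineDerivAt v)

theorem ConvexOn.upperSemicontinuous_fderiv_apply (hf : ConvexOn ℝ univ f)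
    (hd : Differentiable ℝ f) (v : E) : UpperSemicontinuous fun x => fderiv ℝ f x v := by
  intro x c hc
  have hslope : Tendsto (fun t : ℝ => t⁻¹ * (f (x + t • v) - f x)) (𝓝[>] 0)
      (𝓝 (fderiv ℝ f x v)) := by
    have := hasDerivAt_iff_tendsto_slope_zero.mp ((hd x).hasFDerivAt.hasLineDerivAt v)
    simpa using this.mono_left (nhdsGT_le_nhdsNE 0)
  obtain ⟨t, hlt, ht⟩ := ((hslope.eventually (gt_mem_nhds hc)).and self_mem_nhdsWithin).exists
  have hcont : Continuous fun z => t⁻¹ * (f (z + t • v) - f z) := by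
    have := hd.continuous
    fun_prop
  filter_upwards [hcont.continuousAt.eventually (gt_mem_nhds hlt)] with z hz
  exact (hf.fderiv_apply_le_slope (hd z) v ht).trans_lt hz

theorem ConvexOn.continuous_fderiv_apply (hf : ConvexOn ℝ univ f) (hd : Differentiable ℝ f)
    (v : E) : Continuous fun x => fderiv ℝ f x v := by
  have hlower : LowerSemicontinuous fun x => -fderiv ℝ f x (-v) :=
    continuous_neg.comp_upperSemicontinuous_antitone
      (hf.upperSemicontinuous_fderiv_apply hd (-v)) fun _ _ => neg_le_neg
  simp only [map_neg, neg_neg] at hlower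
  exact continuous_iff_lower_upperSemicontinuous.mpr
    ⟨hlower, hf.upperSemicontinuous_fderiv_apply hd v⟩

theorem ConvexOn.contDiff_one [FiniteDimensional ℝ E] (hf : ConvexOn ℝ univ f)
    (hd : Differentiable ℝ f) : ContDiff ℝ 1 f :=
  contDiff_one_iff_fderiv.mpr ⟨hd, continuous_clm_apply.mpr (hf.continuous_fderiv_apply hd)⟩

theorem stmt_5 (n : ℕ) (f : (Fin n → ℝ) → ℝ)
    (hconv : ConvexOn ℝ Set.univ f)
    (hdiff : Differentiable ℝ f) :
    ContDiff ℝ 1 f :=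
  hconv.contDiff_one hdiff
end

section
/- For the M/M/s waiting time function w(x) = (1/μ)·Q_s(x/μ) with Q_s(z) = [Σ_{k=0}^{s-1} z^k/k! + (z^s/s!)·s/(s-z)]^{-1} · (z^s/s!)·s/(s-z)², the function x ↦ w(x) is continuous and strictly increasing on [0, sμ), and w(x) → ∞ as x → sμ⁻. -/
/-!
For `0 < z < s` the reciprocal of `Q_s` is
`(s - z) + (s - 1)! · ∑_{k < s} (s - z)² / (k! z^(s-k))`:
every summand is positive and decreasing in `z`, and the whole expression vanishes at `z = s`.
Hence `Q_s` is strictly increasing (with `Q_s 0 = 0`) and tends to `∞` as `z → s⁻`;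
`w` is `Q_s` rescaled by `μ`.
-/

open Set Filter Finset

open scoped Nat Topology

noncomputable def erlangDelay (s : ℕ) (z : ℝ) : ℝ :=
  ((∑ k ∈ range s, z ^ k / (k ! : ℝ)) + z ^ s / (s ! : ℝ) * ((s : ℝ) / ((s : ℝ) - z)))⁻¹ *
    (z ^ s / (s ! : ℝ) * ((s : ℝ) / ((s : ℝ) - z) ^ 2))

noncomputable def erlangDelayRecip (s : ℕ) (z : ℝ) : ℝ :=
  (s - z) + (s ! / s) * ∑ k ∈ range s, (s - z) ^ 2 / (k ! * z ^ (s - k))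

section

variable {s : ℕ} {z : ℝ}

theorem erlangDelay_eq_inv_erlangDelayRecip (hz : 0 < z) (hzs : z < s) :
    erlangDelay s z = (erlangDelayRecip s z)⁻¹ := by
  have hsz : (s : ℝ) - z ≠ 0 := by linarith
  have hs : (s : ℝ) ≠ 0 := by linarith
  have hterm : ∀ k ∈ range s,
      (s - z) ^ 2 / (k ! * z ^ (s - k)) = (s - z) ^ 2 / z ^ s * (z ^ k / k !) := by
    intro k hk
    rw [← pow_mul_pow_sub z (mem_range.mp hk).le]
    field_simp
  rw [erlangDelay, erlangDelayRecip, sum_congr rfl hterm, ← mul_sum, ← inv_inv (_ * _), mul_inv,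
    inv_inv]
  congr 1
  field_simp
  ring

theorem erlangDelayRecip_pos (hz : 0 < z) (hzs : z < s) : 0 < erlangDelayRecip s z := by
  have hsz : 0 < (s : ℝ) - z := by linarith
  unfold erlangDelayRecip
  positivity

theorem strictAntiOn_erlangDelayRecip : StrictAntiOn (erlangDelayRecip s) (Ioo 0 s) := by
  refine StrictAntiOn.add_antitone (fun y _ z _ hyz => by linarith) ?_
  rintro y ⟨hy, -⟩ z ⟨-, hzs⟩ hyz
  have : 0 ≤ (s : ℝ) - z := by linarith
  dsimp only
  gcongr

theorem tendsto_erlangDelayRecip (hs : 0 < s) :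
    Tendsto (erlangDelayRecip s) (𝓝[<] (s : ℝ)) (𝓝[>] 0) := by
  have hs' : (0 : ℝ) < s := Nat.cast_pos.mpr hs
  have hcont : ContinuousAt (erlangDelayRecip s) s :=
    (continuousAt_id.const_sub _).add <| continuousAt_const.mul <|
      tendsto_finsetSum _ fun k _ => ContinuousAt.div (by fun_prop) (by fun_prop) (by positivity)
  have hzero : erlangDelayRecip s s = 0 := by simp [erlangDelayRecip]
  refine tendsto_nhdsWithin_of_tendsto_nhds_of_eventually_within _
    (hzero ▸ hcont.tendsto.mono_left nhdsWithin_le_nhds) ?_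
  filter_upwards [Ioo_mem_nhdsLT hs'] with z hz
  exact erlangDelayRecip_pos hz.1 hz.2

theorem continuousOn_erlangDelay (hs : 0 < s) : ContinuousOn (erlangDelay s) (Ico 0 s) := by
  have hsz : ∀ z ∈ Ico (0 : ℝ) s, (s : ℝ) - z ≠ 0 := fun z hz => sub_ne_zero.2 hz.2.ne'
  have hden : ∀ z ∈ Ico (0 : ℝ) s, (∑ k ∈ range s, z ^ k / (k ! : ℝ)) +
      z ^ s / (s ! : ℝ) * ((s : ℝ) / ((s : ℝ) - z)) ≠ 0 := by
    rintro z ⟨hz, hzs⟩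
    have hsz : 0 < (s : ℝ) - z := by linarith
    have hterms : 0 < ∑ k ∈ range s, z ^ k / (k ! : ℝ) :=
      sum_pos' (fun k _ => by positivity) ⟨0, mem_range.2 hs, by simp⟩
    positivity
  have hsum : ContinuousOn (fun z : ℝ => ∑ k ∈ range s, z ^ k / (k ! : ℝ)) (Ico 0 s) :=
    continuousOn_finsetSum _ fun k _ => by fun_prop
  have hpow := (continuousOn_pow (s := Ico (0 : ℝ) s) s).div_const (s ! : ℝ)
  have hsub : ContinuousOn (fun z : ℝ => (s : ℝ) - z) (Ico 0 s) := by fun_prop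
  exact (hsum.add (hpow.mul (continuousOn_const.div hsub hsz))).inv₀ hden |>.mul
    (hpow.mul (continuousOn_const.div (hsub.pow 2) fun z hz => pow_ne_zero 2 (hsz z hz)))

theorem erlangDelay_zero (hs : 0 < s) : erlangDelay s 0 = 0 := by
  simp [erlangDelay, hs.ne']

theorem strictMonoOn_erlangDelay (hs : 0 < s) : StrictMonoOn (erlangDelay s) (Ico 0 s) := by
  rintro y ⟨hy, -⟩ z ⟨-, hzs⟩ hyz
  have hz : 0 < z := hy.trans_lt hyz
  rw [erlangDelay_eq_inv_erlangDelayRecip hz hzs]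
  rcases hy.eq_or_lt with rfl | hy
  · rw [erlangDelay_zero hs]
    exact inv_pos.2 (erlangDelayRecip_pos hz hzs)
  · rw [erlangDelay_eq_inv_erlangDelayRecip hy (hyz.trans hzs)]
    exact inv_strictAnti₀ (erlangDelayRecip_pos hz hzs)
      (strictAntiOn_erlangDelayRecip ⟨hy, hyz.trans hzs⟩ ⟨hz, hzs⟩ hyz)

theorem tendsto_erlangDelay (hs : 0 < s) :
    Tendsto (erlangDelay s) (𝓝[<] (s : ℝ)) atTop := by
  refine (tendsto_erlangDelayRecip hs).inv_tendsto_nhdsGT_zero.congr' ?_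
  filter_upwards [Ioo_mem_nhdsLT (Nat.cast_pos.mpr hs)] with z hz
  exact (erlangDelay_eq_inv_erlangDelayRecip hz.1 hz.2).symm

end

/-- The M/M/s expected waiting time `w(x) = (1/μ) Q_s(x/μ)` is continuous and strictly
increasing on `[0, sμ)` and diverges as `x → (sμ)⁻`. -/
theorem stmt_19 (s : ℕ) (hs : 1 ≤ s) (μ : ℝ) (hμ : 0 < μ) :
    letI Q : ℝ → ℝ := fun z =>
      ((∑ k ∈ Finset.range s, z ^ k / (Nat.factorial k : ℝ)) +
          z ^ s / (Nat.factorial s : ℝ) * ((s : ℝ) / ((s : ℝ) - z)))⁻¹ *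
        (z ^ s / (Nat.factorial s : ℝ) * ((s : ℝ) / ((s : ℝ) - z) ^ 2))
    letI w : ℝ → ℝ := fun x => (1 / μ) * Q (x / μ)
    ContinuousOn w (Set.Ico 0 ((s : ℝ) * μ)) ∧
      StrictMonoOn w (Set.Ico 0 ((s : ℝ) * μ)) ∧
      Filter.Tendsto w (nhdsWithin ((s : ℝ) * μ) (Set.Iio ((s : ℝ) * μ)))
        Filter.atTop := by
  show ContinuousOn (fun x => 1 / μ * erlangDelay s (x / μ)) _ ∧
    StrictMonoOn (fun x => 1 / μ * erlangDelay s (x / μ)) _ ∧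
    Tendsto (fun x => 1 / μ * erlangDelay s (x / μ)) _ _
  have hmaps : MapsTo (· / μ) (Ico 0 (s * μ)) (Ico 0 (s : ℝ)) := fun x hx =>
    ⟨div_nonneg hx.1 hμ.le, (div_lt_iff₀ hμ).2 hx.2⟩
  have hscale : Tendsto (· / μ) (𝓝[<] (s * μ)) (𝓝[<] (s : ℝ)) :=
    tendsto_nhdsWithin_of_tendsto_nhds_of_eventually_within _
      (((continuous_id.div_const μ).tendsto' _ _ (mul_div_cancel_right₀ _ hμ.ne')).mono_left
        nhdsWithin_le_nhds)
      (eventually_nhdsWithin_of_forall fun x hx => (div_lt_iff₀ hμ).2 hx)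
  refine ⟨?_, ?_, ?_⟩
  · exact continuousOn_const.mul <|
      (continuousOn_erlangDelay hs).comp (continuousOn_id.div_const μ) hmaps
  · intro x hx y hy hxy
    have hQ := strictMonoOn_erlangDelay hs (hmaps hx) (hmaps hy) (div_lt_div_of_pos_right hxy hμ)
    exact mul_lt_mul_of_pos_left hQ (by positivity)
  · exact ((tendsto_erlangDelay hs).comp hscale).const_mul_atTop (by positivity)
end
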